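/- arXiv:1304.4688 — 2 statements merged into one kernel-verified Lean document; each statement's English description precedes it below -/
import Mathlib

section
/- Let W_T ~ N(0, T) with T > 0, σ > 0, r ∈ ℝ, x > 0, K > 0, and ξ_T = exp((r - σ²/2)T + σW_T). Then E[e^{-rT}·max(x·ξ_T - K, 0)] = x·Φ(d₁) - K·e^{-rT}·Φ(d₂), where d₁ = (ln(x/K) + (r + σ²/2)T)/(σ√T), d₂ = d₁ - σ√T, and Φ is the standard normal CDF. -/
open MeasureTheory ProbabilityTheory

open Set Real

noncomputable def Phi (d : ℝ) : ℝ :=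
  ∫ u in Set.Iic d, Real.exp (-u ^ 2 / 2) / Real.sqrt (2 * Real.pi)

lemma phi_integrable : Integrable (fun u : ℝ => rexp (-u ^ 2 / 2) / Real.sqrt (2 * Real.pi)) := by
  have : (fun u : ℝ => rexp (-u ^ 2 / 2) / Real.sqrt (2 * Real.pi))
      = fun u : ℝ => rexp (-(1/2) * u ^ 2) / Real.sqrt (2 * Real.pi) := by
    funext u; ring_nf
  rw [this]
  exact (integrable_exp_neg_mul_sq (by norm_num)).div_const _

lemma integral_Ici_phi (a : ℝ) :
    ∫ u in Ici a, rexp (-u ^ 2 / 2) / Real.sqrt (2 * Real.pi) = Phi (-a) := by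
  rw [Phi, integral_Ici_eq_integral_Ioi]
  have := integral_comp_neg_Iic (-a) (fun u : ℝ => rexp (-u ^ 2 / 2) / Real.sqrt (2 * Real.pi))
  simp only [neg_neg] at this
  rw [← this]
  congr 1; funext u; rw [neg_pow]; ring_nf

lemma integral_Ici_shift (f : ℝ → ℝ) (a s : ℝ) :
    ∫ u in Ici a, f (u - s) = ∫ u in Ici (a - s), f u := by
  rw [← integral_indicator measurableSet_Ici, ← integral_indicator measurableSet_Ici]
  have : (Ici a).indicator (fun u => f (u - s)) = fun u => (Ici (a - s)).indicator f (u - s) := by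
    funext u
    by_cases h : a ≤ u
    · rw [indicator_of_mem (mem_Ici.mpr h), indicator_of_mem (mem_Ici.mpr (by linarith))]
    · rw [indicator_of_notMem (by simpa using h), indicator_of_notMem (fun hh => h (by simpa using (by linarith [mem_Ici.mp hh] : a ≤ u)))]
  rw [this, integral_sub_right_eq_self ((Ici (a - s)).indicator f) s]

lemma key (s c x K : ℝ) (hs : 0 < s) (hx : 0 < x) (hK : 0 < K) :
    ∫ u, max (x * rexp (c + s * u) - K) 0 * (rexp (-u ^ 2 / 2) / Real.sqrt (2 * Real.pi))
      = x * rexp (c + s ^ 2 / 2) * Phi ((Real.log (x / K) + c) / s + s)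
        - K * Phi ((Real.log (x / K) + c) / s) := by
  set d : ℝ := (Real.log (x / K) + c) / s with hd
  set a : ℝ := -d with ha
  have hcond : ∀ u : ℝ, (0 ≤ x * rexp (c + s * u) - K) ↔ a ≤ u := by
    intro u
    rw [sub_nonneg, ← div_le_iff₀' hx, ← Real.log_le_iff_le_exp (by positivity),
      Real.log_div hK.ne' hx.ne']
    rw [ha, hd, Real.log_div hx.ne' hK.ne', ← neg_div, div_le_iff₀ hs]
    constructor <;> intro h <;> nlinarith [h]
  have hind : (fun u : ℝ => max (x * rexp (c + s * u) - K) 0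
        * (rexp (-u ^ 2 / 2) / Real.sqrt (2 * Real.pi)))
      = (Ici a).indicator (fun u => (x * rexp (c + s * u) - K)
        * (rexp (-u ^ 2 / 2) / Real.sqrt (2 * Real.pi))) := by
    funext u
    by_cases h : a ≤ u
    · rw [indicator_of_mem (mem_Ici.mpr h), max_eq_left ((hcond u).mpr h)]
    · rw [indicator_of_notMem (by simpa using h),
        max_eq_right (le_of_not_ge (fun h0 => h ((hcond u).mp h0))), zero_mul]
  rw [hind, integral_indicator measurableSet_Ici]
  have hsplit : ∀ u : ℝ, (x * rexp (c + s * u) - K) * (rexp (-u ^ 2 / 2) / Real.sqrt (2 * Real.pi))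
      = x * rexp (c + s ^ 2 / 2) * (rexp (-(u - s) ^ 2 / 2) / Real.sqrt (2 * Real.pi))
        - K * (rexp (-u ^ 2 / 2) / Real.sqrt (2 * Real.pi)) := by
    intro u
    have h1 : rexp (c + s * u) * rexp (-u ^ 2 / 2)
        = rexp (c + s ^ 2 / 2) * rexp (-(u - s) ^ 2 / 2) := by
      rw [← Real.exp_add, ← Real.exp_add]; congr 1; ring
    have h2 : (x * rexp (c + s * u) - K) * (rexp (-u ^ 2 / 2) / Real.sqrt (2 * Real.pi))
        = (x * (rexp (c + s * u) * rexp (-u ^ 2 / 2))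
            - K * rexp (-u ^ 2 / 2)) / Real.sqrt (2 * Real.pi) := by ring
    rw [h2, h1]; ring
  rw [setIntegral_congr_fun measurableSet_Ici (fun u _ => hsplit u),
    integral_sub (((phi_integrable.comp_sub_right s).const_mul _).integrableOn)
      ((phi_integrable.const_mul K).integrableOn),
    MeasureTheory.integral_const_mul, MeasureTheory.integral_const_mul,
    integral_Ici_shift (fun u => rexp (-u ^ 2 / 2) / Real.sqrt (2 * Real.pi)) a s,
    integral_Ici_phi, integral_Ici_phi]
  have e1 : -(a - s) = d + s := by rw [ha]; ring
  have e2 : -a = d := by rw [ha]; ring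
  rw [e1, e2]

theorem black_scholes_call_price
    {Ω : Type*} [MeasureSpace Ω] (μ : Measure Ω) [IsProbabilityMeasure μ]
    (r σ T x K : ℝ) (hσ : 0 < σ) (hT : 0 < T) (hx : 0 < x) (hK : 0 < K)
    (W : Ω → ℝ) (hW : Measure.map W μ = gaussianReal 0 (Real.toNNReal T)) :
    ∫ ω, Real.exp (-(r * T)) *
        max (x * Real.exp ((r - σ ^ 2 / 2) * T + σ * W ω) - K) 0 ∂μ =
      x * Phi ((Real.log (x / K) + (r + σ ^ 2 / 2) * T) / (σ * Real.sqrt T)) -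
        K * Real.exp (-(r * T)) *
          Phi ((Real.log (x / K) + (r + σ ^ 2 / 2) * T) / (σ * Real.sqrt T)
                - σ * Real.sqrt T) := by
  have hWm : AEMeasurable W μ := aemeasurable_of_map_neZero (by rw [hW]; infer_instance)
  have hfc : Continuous (fun w : ℝ => rexp (-(r * T)) *
      max (x * rexp ((r - σ ^ 2 / 2) * T + σ * w) - K) 0) := by fun_prop
  have h1 : ∫ ω, rexp (-(r * T)) * max (x * rexp ((r - σ ^ 2 / 2) * T + σ * W ω) - K) 0 ∂μ
      = ∫ w, rexp (-(r * T)) * max (x * rexp ((r - σ ^ 2 / 2) * T + σ * w) - K) 0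
          ∂(gaussianReal 0 (Real.toNNReal T)) := by
    rw [← hW]; exact (integral_map hWm hfc.aestronglyMeasurable).symm
  have hvar : (⟨(Real.sqrt T) ^ 2, sq_nonneg _⟩ : NNReal) * 1 = Real.toNNReal T := by
    apply NNReal.coe_injective
    simp [Real.coe_toNNReal _ hT.le, Real.sq_sqrt hT.le]; rfl
  have h2 : gaussianReal 0 (Real.toNNReal T)
      = (gaussianReal 0 1).map (fun u => Real.sqrt T * u) := by
    rw [gaussianReal_map_const_mul, mul_zero]; exact congrArg (gaussianReal 0) hvar.symm
  have h3 : ∫ w, rexp (-(r * T)) * max (x * rexp ((r - σ ^ 2 / 2) * T + σ * w) - K) 0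
        ∂((gaussianReal 0 1).map (fun u => Real.sqrt T * u))
      = ∫ u, rexp (-(r * T)) *
          max (x * rexp ((r - σ ^ 2 / 2) * T + σ * (Real.sqrt T * u)) - K) 0
          ∂(gaussianReal 0 1) :=
    integral_map (measurable_const_mul _).aemeasurable hfc.aestronglyMeasurable
  rw [h1, h2, h3, gaussianReal_of_var_ne_zero 0 one_ne_zero]
  have hpdf : gaussianPDF 0 1 = fun u =>
      ((Real.toNNReal (gaussianPDFReal 0 1 u) : NNReal) : ENNReal) := rfl
  rw [hpdf, integral_withDensity_eq_integral_smul
    ((measurable_gaussianPDFReal 0 1).real_toNNReal) _]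
  have h5 : (fun u : ℝ => (Real.toNNReal (gaussianPDFReal 0 1 u)) •
        (rexp (-(r * T)) *
          max (x * rexp ((r - σ ^ 2 / 2) * T + σ * (Real.sqrt T * u)) - K) 0))
      = fun u : ℝ => rexp (-(r * T)) *
          (max (x * rexp ((r - σ ^ 2 / 2) * T + (σ * Real.sqrt T) * u) - K) 0 *
            (rexp (-u ^ 2 / 2) / Real.sqrt (2 * Real.pi))) := by
    funext u
    rw [NNReal.smul_def, smul_eq_mul, Real.coe_toNNReal _ (gaussianPDFReal_nonneg _ _ _)]
    have hg : gaussianPDFReal 0 1 u = rexp (-u ^ 2 / 2) / Real.sqrt (2 * Real.pi) := by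
      simp only [gaussianPDFReal, NNReal.coe_one, mul_one, sub_zero, inv_mul_eq_div]
    rw [hg, mul_assoc σ]
    ring
  rw [h5, MeasureTheory.integral_const_mul,
    key (σ * Real.sqrt T) ((r - σ ^ 2 / 2) * T) x K (by positivity) hx hK]
  have hs2 : (σ * Real.sqrt T) ^ 2 = σ ^ 2 * T := by rw [mul_pow, Real.sq_sqrt hT.le]
  have hne : σ * Real.sqrt T ≠ 0 := by positivity
  have hD : (Real.log (x / K) + (r - σ ^ 2 / 2) * T) / (σ * Real.sqrt T)
      = (Real.log (x / K) + (r + σ ^ 2 / 2) * T) / (σ * Real.sqrt T) - σ * Real.sqrt T := by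
    field_simp
    nlinarith [Real.sq_sqrt hT.le]
  have hE : (r - σ ^ 2 / 2) * T + (σ * Real.sqrt T) ^ 2 / 2 = r * T := by
    rw [hs2]; ring
  rw [hD, hE, sub_add_cancel]
  have hexp : rexp (-(r * T)) * rexp (r * T) = 1 := by
    rw [← Real.exp_add]; simp
  linear_combination (x * Phi ((Real.log (x / K) + (r + σ ^ 2 / 2) * T)
    / (σ * Real.sqrt T))) * hexp
end

section
/- Let S_T = x·ξ_T - (β/σ)·e^{rT} with ξ_T = exp((r - σ²/2)T + σW_T), W_T ~ N(0,T), σ > 0, β ≥ 0, x > 0, K > 0. Then E[e^{-rT}·max(S_T - K, 0)] = x·Φ(d₁^β) - (K + (β/σ)e^{rT})·e^{-rT}·Φ(d₂^β), where d₁^β = (ln(x/(K + (β/σ)e^{rT})) + (r + σ²/2)T)/(σ√T) and d₂^β = d₁^β - σ√T. -/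
open MeasureTheory ProbabilityTheory

lemma gauss_core {v : ℝ} (hv : 0 < v) (c L : ℝ) :
    ∫ y in Set.Ici L, (Real.sqrt (2 * Real.pi * v))⁻¹ * Real.exp (-(y - c) ^ 2 / (2 * v))
      = Phi ((c - L) / Real.sqrt v) := by
  have hs : 0 < Real.sqrt v := Real.sqrt_pos.mpr hv
  rw [MeasureTheory.integral_Ici_eq_integral_Ioi]
  -- translation by c
  have A : MeasurableEmbedding (fun u : ℝ => u + c) :=
    (Homeomorph.addRight c).isClosedEmbedding.measurableEmbedding
  have h1 : (∫ y in Set.Ioi L, (Real.sqrt (2 * Real.pi * v))⁻¹ *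
        Real.exp (-(y - c) ^ 2 / (2 * v)))
      = ∫ u in Set.Ioi (L - c), (Real.sqrt (2 * Real.pi * v))⁻¹ *
        Real.exp (-u ^ 2 / (2 * v)) := by
    have := A.setIntegral_map (μ := volume)
      (fun y => (Real.sqrt (2 * Real.pi * v))⁻¹ * Real.exp (-(y - c) ^ 2 / (2 * v)))
      (Set.Ioi L)
    rw [map_add_right_eq_self volume c] at this
    rw [this]
    congr 1
    · ext u; simp [Set.mem_Ioi, sub_lt_iff_lt_add]
    · ext u; rw [add_sub_cancel_right]
  rw [h1]
  -- scaling by √v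
  have h2 : (∫ u in Set.Ioi (L - c), (Real.sqrt (2 * Real.pi * v))⁻¹ *
        Real.exp (-u ^ 2 / (2 * v)))
      = Real.sqrt v • ∫ t in Set.Ioi ((L - c) / Real.sqrt v),
          (Real.sqrt (2 * Real.pi * v))⁻¹ * Real.exp (-(Real.sqrt v * t) ^ 2 / (2 * v)) := by
    rw [MeasureTheory.integral_comp_mul_left_Ioi
      (fun u => (Real.sqrt (2 * Real.pi * v))⁻¹ * Real.exp (-u ^ 2 / (2 * v)))
      ((L - c) / Real.sqrt v) hs, mul_div_cancel₀ _ hs.ne', smul_smul,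
      mul_inv_cancel₀ hs.ne', one_smul]
  rw [h2]
  have h3 : ∀ t : ℝ, (Real.sqrt (2 * Real.pi * v))⁻¹ *
      Real.exp (-(Real.sqrt v * t) ^ 2 / (2 * v))
      = (Real.sqrt v)⁻¹ * (Real.exp (-t ^ 2 / 2) / Real.sqrt (2 * Real.pi)) := by
    intro t
    rw [Real.sqrt_mul (by positivity) v]
    rw [mul_pow, Real.sq_sqrt hv.le]
    rw [mul_inv]
    have : -(v * t ^ 2) / (2 * v) = -t ^ 2 / 2 := by field_simp
    rw [this]
    ring
  simp_rw [h3]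
  rw [MeasureTheory.integral_const_mul, smul_eq_mul, ← mul_assoc,
    mul_inv_cancel₀ hs.ne', one_mul]
  have h4 : (∫ t in Set.Ioi ((L - c) / Real.sqrt v),
      Real.exp (-t ^ 2 / 2) / Real.sqrt (2 * Real.pi))
      = ∫ t in Set.Iic (-((L - c) / Real.sqrt v)),
        Real.exp (-t ^ 2 / 2) / Real.sqrt (2 * Real.pi) := by
    rw [← integral_comp_neg_Ioi]
    simp [neg_pow]
  rw [h4]
  unfold Phi
  congr 1
  rw [← neg_div, neg_sub]

theorem crisis_call_premium_formula
    {Ω : Type*} [MeasureSpace Ω] (μ : Measure Ω) [IsProbabilityMeasure μ]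
    (r σ β T x K : ℝ) (hσ : 0 < σ) (hβ : 0 ≤ β) (hT : 0 < T) (hx : 0 < x) (hK : 0 < K)
    (hK' : 0 < K + (β / σ) * Real.exp (r * T))
    (W : Ω → ℝ) (hW : Measure.map W μ = gaussianReal 0 (Real.toNNReal T)) :
    ∫ ω, Real.exp (-(r * T)) *
        max ((x * Real.exp ((r - σ ^ 2 / 2) * T + σ * W ω)
              - (β / σ) * Real.exp (r * T)) - K) 0 ∂μ =
      x * Phi ((Real.log (x / (K + (β / σ) * Real.exp (r * T))) + (r + σ ^ 2 / 2) * T)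
                / (σ * Real.sqrt T)) -
        (K + (β / σ) * Real.exp (r * T)) * Real.exp (-(r * T)) *
          Phi ((Real.log (x / (K + (β / σ) * Real.exp (r * T))) + (r + σ ^ 2 / 2) * T)
                / (σ * Real.sqrt T) - σ * Real.sqrt T) := by
  set K' : ℝ := K + (β / σ) * Real.exp (r * T) with hK'def
  set T' : NNReal := Real.toNNReal T with hT'def
  have hTc : ((T' : NNReal) : ℝ) = T := Real.coe_toNNReal T hT.le
  have hT0 : T' ≠ 0 := by
    rw [hT'def, Ne, Real.toNNReal_eq_zero]; exact not_le.mpr hT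
  have hsT : 0 < Real.sqrt T := Real.sqrt_pos.mpr hT
  set c₀ : ℝ := (Real.log (K' / x) - (r - σ ^ 2 / 2) * T) / σ with hc₀
  set f : ℝ → ℝ := fun w => Real.exp (-(r * T)) *
      max ((x * Real.exp ((r - σ ^ 2 / 2) * T + σ * w) - (β / σ) * Real.exp (r * T)) - K) 0
    with hfdef
  have hfc : Continuous f := by
    apply continuous_const.mul
    exact (((continuous_const.mul (Real.continuous_exp.comp (by continuity))).sub
      continuous_const).sub continuous_const).max continuous_const
  -- W is AEMeasurable
  have hWm : AEMeasurable W μ := by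
    by_contra h
    rw [Measure.map_of_not_aemeasurable h] at hW
    have h1 : (gaussianReal 0 T') Set.univ = 1 := measure_univ
    rw [← hW] at h1
    simp at h1
  have step1 : (∫ ω, f (W ω) ∂μ) = ∫ w, f w ∂(gaussianReal 0 T') := by
    rw [← hW]; exact (integral_map hWm hfc.aestronglyMeasurable).symm
  have step2 : (∫ w, f w ∂(gaussianReal 0 T'))
      = ∫ w, gaussianPDFReal 0 T' w * f w := by
    rw [gaussianReal_of_var_ne_zero 0 hT0]
    have : (gaussianPDF 0 T') = fun w => ((Real.toNNReal (gaussianPDFReal 0 T' w) : NNReal) : ENNReal) := rfl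
    rw [this, integral_withDensity_eq_integral_smul
      ((measurable_gaussianPDFReal 0 T').real_toNNReal) f]
    congr 1
    funext w
    simp [NNReal.smul_def, Real.coe_toNNReal _ (gaussianPDFReal_nonneg 0 T' w)]
  -- pointwise indicator identity
  have key : (fun w => gaussianPDFReal 0 T' w * f w)
      = Set.indicator (Set.Ici c₀) (fun w =>
          x * gaussianPDFReal (σ * T) T' w
            - K' * Real.exp (-(r * T)) * gaussianPDFReal 0 T' w) := by
    funext w
    have harg : (x * Real.exp ((r - σ ^ 2 / 2) * T + σ * w) - (β / σ) * Real.exp (r * T)) - K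
        = x * Real.exp ((r - σ ^ 2 / 2) * T + σ * w) - K' := by rw [hK'def]; ring
    by_cases hw : c₀ ≤ w
    · rw [Set.indicator_of_mem (Set.mem_Ici.mpr hw)]
      have hge : K' ≤ x * Real.exp ((r - σ ^ 2 / 2) * T + σ * w) := by
        have h1 : Real.log (K' / x) ≤ (r - σ ^ 2 / 2) * T + σ * w := by
          have hw2 : (Real.log (K' / x) - (r - σ ^ 2 / 2) * T) / σ ≤ w := hw
          have := (div_le_iff₀ hσ).mp hw2
          linarith
        have h2 : K' / x ≤ Real.exp ((r - σ ^ 2 / 2) * T + σ * w) :=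
          (Real.log_le_iff_le_exp (by positivity)).mp h1
        calc K' = (K' / x) * x := by field_simp
          _ ≤ Real.exp ((r - σ ^ 2 / 2) * T + σ * w) * x := by
              apply mul_le_mul_of_nonneg_right h2 hx.le
          _ = x * Real.exp ((r - σ ^ 2 / 2) * T + σ * w) := mul_comm _ _
      simp only [hfdef, harg]
      rw [max_eq_left (by linarith)]
      have hexp : Real.exp (-(r * T)) * Real.exp ((r - σ ^ 2 / 2) * T + σ * w) *
          Real.exp (-(w - 0) ^ 2 / (2 * ((T' : NNReal) : ℝ)))
          = Real.exp (-(w - σ * T) ^ 2 / (2 * ((T' : NNReal) : ℝ))) := by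
        rw [← Real.exp_add, ← Real.exp_add, hTc]
        congr 1
        field_simp
        ring
      simp only [gaussianPDFReal]
      linear_combination (x * (Real.sqrt (2 * Real.pi * ((T' : NNReal) : ℝ)))⁻¹) * hexp
    · rw [Set.indicator_of_notMem (by simpa using hw)]
      have hlt : x * Real.exp ((r - σ ^ 2 / 2) * T + σ * w) ≤ K' := by
        have hw' : w < c₀ := not_le.mp hw
        have h1 : (r - σ ^ 2 / 2) * T + σ * w < Real.log (K' / x) := by
          have hw2 : w < (Real.log (K' / x) - (r - σ ^ 2 / 2) * T) / σ := hw'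
          have := (lt_div_iff₀ hσ).mp hw2
          linarith
        have h2 : Real.exp ((r - σ ^ 2 / 2) * T + σ * w) < K' / x :=
          (Real.lt_log_iff_exp_lt (by positivity)).mp h1
        have := (mul_lt_mul_of_pos_left h2 hx)
        rw [mul_div_cancel₀] at this
        · exact this.le
        · exact hx.ne'
      simp only [hfdef, harg]
      rw [max_eq_right (by linarith)]
      ring
  rw [step1, step2, key, integral_indicator measurableSet_Ici]
  have h₁ : Integrable (fun w => x * gaussianPDFReal (σ * T) T' w)
      (volume.restrict (Set.Ici c₀)) :=
    ((integrable_gaussianPDFReal (σ * T) T').restrict).const_mul x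
  have h₂ : Integrable (fun w => K' * Real.exp (-(r * T)) * gaussianPDFReal 0 T' w)
      (volume.restrict (Set.Ici c₀)) :=
    ((integrable_gaussianPDFReal 0 T').restrict).const_mul _
  rw [integral_sub h₁ h₂, integral_const_mul, integral_const_mul]
  have hpdfint : ∀ m : ℝ, (∫ w in Set.Ici c₀, gaussianPDFReal m T' w)
      = Phi ((m - c₀) / Real.sqrt T) := by
    intro m
    simp only [gaussianPDFReal, hTc]
    exact gauss_core hT m c₀
  rw [hpdfint, hpdfint]
  have hst : Real.sqrt T * Real.sqrt T = T := Real.mul_self_sqrt hT.le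
  have hlog : Real.log (K' / x) = - Real.log (x / K') := by
    rw [← Real.log_inv, inv_div]
  have eq1 : (σ * T - c₀) / Real.sqrt T
      = (Real.log (x / K') + (r + σ ^ 2 / 2) * T) / (σ * Real.sqrt T) := by
    rw [hc₀, hlog, ← hst]
    field_simp
    ring
  have eq2 : (0 - c₀) / Real.sqrt T
      = (Real.log (x / K') + (r + σ ^ 2 / 2) * T) / (σ * Real.sqrt T) - σ * Real.sqrt T := by
    rw [hc₀, hlog]
    field_simp
    linear_combination (2 * σ ^ 2) * hst
  rw [eq1, eq2]
end
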